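/- Let W_aff be an affine Weyl group with simple reflections s_0,...,s_n and let Π_aff^{re,+} be the set of positive real roots. For any positive real root α, the length of the reflection s_α satisfies ℓ(s_α) ≤ 2·min{ht(α∨), ht(α)} − 1, where ht denotes the height (sum of coefficients in the simple root/coroot basis). -/

import Mathlib

/-!
Both bounds come from descending along simple reflections, using `s_{s_k α} = s_k s_α s_k`, so
that one descent step changes `ℓ(s_α)` by at most `2`. For the bound by `ht α`, pick `k` with
`⟨α, α_k∨⟩ ≥ 1` (it exists because `⟨α, c⟩ = 0` while `⟨α, α∨⟩ = 2`); then `s_k α` is either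
negative, which forces `α = α_k`, or a positive root of height `ht α - ⟨α, α_k∨⟩`. For the bound
by `ht α∨`, pick a right descent `k` of `s_α`; then `s_α α_k = α_k - ⟨α_k, α∨⟩ α ≤ 0` gives
`⟨α_k, α∨⟩ ≥ 1`, the coroot of `s_k α` has height `ht α∨ - ⟨α_k, α∨⟩`, and `ℓ(s_{s_k α}) < ℓ(s_α)`.
-/

/-- Elements of the affine root lattice (resp. affine coroot lattice) of the affine
(untwisted) Kac–Moody root system, written in coordinates with respect to the simple
roots `α_0, …, α_n` (resp. the simple coroots `α_0∨, …, α_n∨`).  The dominance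
(partial) order `a ≤ b` (meaning `b - a` is a nonnegative combination of the simple
roots/coroots) is the coordinatewise order. -/
abbrev AffLat (n : ℕ) := Fin (n + 1) → ℤ

/-- The `i`-th simple root (resp. simple coroot) as a coordinate vector. -/
def simpleVec {n : ℕ} (i : Fin (n + 1)) : AffLat n := Pi.single i 1

/-- The height of a root (resp. coroot): the sum of its coordinates in the basis of
simple roots (resp. simple coroots). -/
def htv {n : ℕ} (a : AffLat n) : ℤ := ∑ j, a j

/-- `a` is a simple root (a standard basis vector). -/
def IsSimpleVec {n : ℕ} (a : AffLat n) : Prop := ∃ i, a = simpleVec i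

/-- Axiomatization of the affine (untwisted) Kac–Moody root system attached to a
finite simple Lie algebra, together with its affine Weyl group `W` (a Coxeter group
with simple reflections `s_0, …, s_n`), its action on the root and coroot lattices,
the coroot map `α ↦ α∨` on real roots, the reflection map `α ↦ s_α`, and the
imaginary coroot `c = α_0∨ + θ∨`. -/
structure AffineRootSystem (n : ℕ) (W : Type*) [Group W] where
  /-- the affine Cartan matrix: `cartan i j = ⟨α_j, α_i∨⟩` -/
  cartan : Fin (n + 1) → Fin (n + 1) → ℤ
  cartan_diag : ∀ i, cartan i i = 2
  cartan_offdiag : ∀ i j, i ≠ j → cartan i j ≤ 0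
  cartan_symm_zero : ∀ i j, cartan i j = 0 → cartan j i = 0
  /-- the Coxeter matrix of the affine Weyl group -/
  M : CoxeterMatrix (Fin (n + 1))
  /-- the affine Weyl group, as a Coxeter system with simple reflections
  `cs.simple 0, …, cs.simple n` and Coxeter length `cs.length` -/
  cs : CoxeterSystem M W
  /-- the action of the affine Weyl group on the root lattice -/
  actR : W → AffLat n → AffLat n
  actR_one : ∀ a, actR 1 a = a
  actR_mul : ∀ u v a, actR (u * v) a = actR u (actR v a)
  actR_add : ∀ w a b, actR w (a + b) = actR w a + actR w b
  actR_simple : ∀ i a, actR (cs.simple i) a = a - (∑ k, cartan i k * a k) • simpleVec i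
  /-- the action of the affine Weyl group on the coroot lattice -/
  actC : W → AffLat n → AffLat n
  actC_one : ∀ b, actC 1 b = b
  actC_mul : ∀ u v b, actC (u * v) b = actC u (actC v b)
  actC_add : ∀ w a b, actC w (a + b) = actC w a + actC w b
  actC_simple : ∀ i b, actC (cs.simple i) b = b - (∑ k, cartan k i * b k) • simpleVec i
  /-- the coroot `α∨` of a real root `α` -/
  coroot : AffLat n → AffLat n
  coroot_simple : ∀ i, coroot (simpleVec i) = simpleVec i
  coroot_act : ∀ w a, coroot (actR w a) = actC w (coroot a)
  /-- the reflection `s_α ∈ W` of a real root `α` -/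
  refl : AffLat n → W
  refl_simple : ∀ i, refl (simpleVec i) = cs.simple i
  refl_act : ∀ w a, refl (actR w a) = w * refl a * w⁻¹
  /-- the coordinates of the imaginary coroot `c = α_0∨ + θ∨` in the basis of simple
  coroots; thus `imag 0 = 1` and `imag i = m_i` for `i ≥ 1`, where
  `θ∨ = m_1 α_1∨ + ⋯ + m_n α_n∨` -/
  imag : AffLat n
  imag_zero : imag 0 = 1
  imag_pos : ∀ i, 1 ≤ imag i
  imag_invariant : ∀ w, actC w imag = imag
  /-- the standard relation between lengths and positivity of roots:
  `ℓ(w s_α) < ℓ(w)` iff `w(α) < 0` -/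
  length_refl_lt_iff : ∀ a : AffLat n, (∃ w i, a = actR w (simpleVec i)) → 0 ≤ a →
    ∀ w : W, cs.length (w * refl a) < cs.length w ↔ actR w a ≤ 0

namespace AffineRootSystem

variable {n : ℕ} {W : Type*} [Group W] (R : AffineRootSystem n W)

/-- `α` is a positive real root of the affine root system. -/
def IsPosRoot (a : AffLat n) : Prop := (∃ w i, a = R.actR w (simpleVec i)) ∧ 0 ≤ a

/-- The evaluation pairing `⟨α, β∨⟩` of a root `α` (coordinates w.r.t. the simple
roots) against a coroot `β∨` (coordinates w.r.t. the simple coroots), computed via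
the affine Cartan matrix `cartan i k = ⟨α_k, α_i∨⟩`. -/
def pairing (a b : AffLat n) : ℤ := ∑ i, ∑ k, b i * (R.cartan i k * a k)

/-- `α` belongs to the set `Π̃` of positive real roots with `ℓ(s_α) = 2 ht(α∨) - 1`
(the roots appearing in the affine quantum Chevalley formula). -/
def IsChevalleyRoot (a : AffLat n) : Prop :=
  R.IsPosRoot a ∧ (R.cs.length (R.refl a) : ℤ) = 2 * htv (R.coroot a) - 1

end AffineRootSystem

namespace CoxeterSystem

variable {B : Type*} {M : CoxeterMatrix B} {W : Type*} [Group W] (cs : CoxeterSystem M W)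

theorem length_simple_mul_mul_simple_le (w : W) (i j : B) :
    cs.length (cs.simple i * w * cs.simple j) ≤ cs.length w + 2 := by
  have h₁ := cs.length_mul_le (cs.simple i * w) (cs.simple j)
  have h₂ := cs.length_mul_le (cs.simple i) w
  rw [length_simple] at h₁ h₂
  omega

end CoxeterSystem

section Lattice

variable {n : ℕ}

theorem simpleVec_apply (i j : Fin (n + 1)) : simpleVec i j = if j = i then 1 else 0 :=
  Pi.single_apply i 1 j

theorem simpleVec_self (i : Fin (n + 1)) : simpleVec i i = (1 : ℤ) := Pi.single_eq_same i 1

theorem simpleVec_of_ne {i j : Fin (n + 1)} (h : j ≠ i) : simpleVec i j = (0 : ℤ) :=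
  Pi.single_eq_of_ne h 1

theorem simpleVec_nonneg (i : Fin (n + 1)) : (0 : AffLat n) ≤ simpleVec i :=
  Pi.single_nonneg.mpr zero_le_one

theorem eq_smul_simpleVec_of_forall_ne {x : AffLat n} {k : Fin (n + 1)}
    (h : ∀ j, j ≠ k → x j = 0) : x = x k • simpleVec k := by
  ext j
  by_cases hj : j = k
  · simp [hj, simpleVec_self]
  · simp [h j hj, simpleVec_of_ne hj]

theorem apply_eq_zero_of_sub_smul_simpleVec_eq_neg {x : AffLat n} {t : ℤ} {k j : Fin (n + 1)}
    (h : x - t • simpleVec k = -x) (hj : j ≠ k) : x j = 0 := by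
  have := congrFun h j
  simp only [Pi.sub_apply, Pi.smul_apply, Pi.neg_apply, simpleVec_of_ne hj, smul_zero,
    sub_zero] at this
  omega

theorem htv_simpleVec (i : Fin (n + 1)) : htv (simpleVec i) = 1 := by
  simp [htv, simpleVec_apply]

theorem htv_sub_smul_simpleVec (x : AffLat n) (t : ℤ) (k : Fin (n + 1)) :
    htv (x - t • simpleVec k) = htv x - t := by
  simp [htv, Finset.sum_sub_distrib, simpleVec_apply]

theorem htv_nonneg {x : AffLat n} (hx : 0 ≤ x) : 0 ≤ htv x :=
  Finset.sum_nonneg fun j _ => hx j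

end Lattice

namespace AffineRootSystem

variable {n : ℕ} {W : Type*} [Group W] (R : AffineRootSystem n W)

theorem pairing_sub_left (a a' b : AffLat n) :
    R.pairing (a - a') b = R.pairing a b - R.pairing a' b := by
  simp [pairing, mul_sub, Finset.sum_sub_distrib]

theorem pairing_sub_right (a b b' : AffLat n) :
    R.pairing a (b - b') = R.pairing a b - R.pairing a b' := by
  simp [pairing, sub_mul, Finset.sum_sub_distrib]

theorem pairing_smul_left (t : ℤ) (a b : AffLat n) :
    R.pairing (t • a) b = t * R.pairing a b := by
  simp [pairing, Finset.mul_sum, mul_left_comm]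

theorem pairing_smul_right (t : ℤ) (a b : AffLat n) :
    R.pairing a (t • b) = t * R.pairing a b := by
  simp [pairing, Finset.mul_sum, mul_assoc]

theorem pairing_simpleVec_right (a : AffLat n) (i : Fin (n + 1)) :
    R.pairing a (simpleVec i) = ∑ k, R.cartan i k * a k := by
  simp [pairing, simpleVec_apply]

theorem pairing_simpleVec_left (i : Fin (n + 1)) (b : AffLat n) :
    R.pairing (simpleVec i) b = ∑ k, R.cartan k i * b k := by
  simp [pairing, simpleVec_apply, mul_comm]

theorem pairing_eq_sum_right (a b : AffLat n) :
    R.pairing a b = ∑ i, b i * R.pairing a (simpleVec i) := by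
  simp_rw [pairing_simpleVec_right]
  simp [pairing, Finset.mul_sum]

theorem pairing_eq_sum_left (a b : AffLat n) :
    R.pairing a b = ∑ k, a k * R.pairing (simpleVec k) b := by
  simp_rw [pairing_simpleVec_left, Finset.mul_sum]
  rw [pairing, Finset.sum_comm]
  exact Finset.sum_congr rfl fun _ _ => Finset.sum_congr rfl fun _ _ => by ring

theorem pairing_simpleVec_self (i : Fin (n + 1)) :
    R.pairing (simpleVec i) (simpleVec i) = 2 := by
  simp [pairing_simpleVec_right, simpleVec_apply, R.cartan_diag]

theorem actR_simple_eq (i : Fin (n + 1)) (a : AffLat n) :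
    R.actR (R.cs.simple i) a = a - R.pairing a (simpleVec i) • simpleVec i := by
  rw [pairing_simpleVec_right]; exact R.actR_simple i a

theorem actC_simple_eq (i : Fin (n + 1)) (b : AffLat n) :
    R.actC (R.cs.simple i) b = b - R.pairing (simpleVec i) b • simpleVec i := by
  rw [pairing_simpleVec_left]; exact R.actC_simple i b

theorem actR_sub (w : W) (a b : AffLat n) : R.actR w (a - b) = R.actR w a - R.actR w b :=
  (AddMonoidHom.mk' (R.actR w) (R.actR_add w)).map_sub a b

theorem actR_neg (w : W) (a : AffLat n) : R.actR w (-a) = -R.actR w a :=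
  (AddMonoidHom.mk' (R.actR w) (R.actR_add w)).map_neg a

theorem actR_zsmul (w : W) (t : ℤ) (a : AffLat n) : R.actR w (t • a) = t • R.actR w a :=
  (AddMonoidHom.mk' (R.actR w) (R.actR_add w)).map_zsmul t a

theorem actC_neg (w : W) (b : AffLat n) : R.actC w (-b) = -R.actC w b :=
  (AddMonoidHom.mk' (R.actC w) (R.actC_add w)).map_neg b

theorem actR_mul_inv_cancel (w : W) (a : AffLat n) : R.actR w (R.actR w⁻¹ a) = a := by
  rw [← R.actR_mul, mul_inv_cancel, R.actR_one]

theorem actR_simple_simpleVec (i : Fin (n + 1)) :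
    R.actR (R.cs.simple i) (simpleVec i) = -simpleVec i := by
  rw [actR_simple_eq, pairing_simpleVec_self, two_smul]
  abel

theorem actC_simple_simpleVec (i : Fin (n + 1)) :
    R.actC (R.cs.simple i) (simpleVec i) = -simpleVec i := by
  rw [actC_simple_eq, pairing_simpleVec_self, two_smul]
  abel

theorem actR_simple_apply_of_ne (a : AffLat n) {i j : Fin (n + 1)} (h : j ≠ i) :
    R.actR (R.cs.simple i) a j = a j := by
  simp [actR_simple_eq, simpleVec_of_ne h]

theorem actR_simple_of_forall_ne {a : AffLat n} {i : Fin (n + 1)}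
    (h : ∀ j, j ≠ i → a j = 0) : R.actR (R.cs.simple i) a = -a := by
  rw [eq_smul_simpleVec_of_forall_ne h, actR_zsmul, actR_simple_simpleVec, smul_neg]

theorem pairing_actR_simple_actC_simple (i : Fin (n + 1)) (a b : AffLat n) :
    R.pairing (R.actR (R.cs.simple i) a) (R.actC (R.cs.simple i) b) = R.pairing a b := by
  rw [actR_simple_eq, actC_simple_eq]
  simp only [pairing_sub_left, pairing_sub_right, pairing_smul_left, pairing_smul_right,
    pairing_simpleVec_self]
  ring

theorem pairing_actR_actC (w : W) (a b : AffLat n) :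
    R.pairing (R.actR w a) (R.actC w b) = R.pairing a b := by
  induction w using R.cs.simple_induction_left with
  | one => rw [R.actR_one, R.actC_one]
  | mul_simple_left w i ih => rw [R.actR_mul, R.actC_mul, pairing_actR_simple_actC_simple, ih]

/-- Since `c` is fixed by every `s_i`, it pairs to zero with every simple root. -/
theorem pairing_imag_eq_zero (a : AffLat n) : R.pairing a R.imag = 0 := by
  have hsimple (k : Fin (n + 1)) : R.pairing (simpleVec k) R.imag = 0 := by
    have h := R.imag_invariant (R.cs.simple k)
    rw [actC_simple_eq, sub_eq_self] at h
    simpa [simpleVec_self] using congrFun h k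
  rw [pairing_eq_sum_left]
  simp [hsimple]

def IsRealRoot (a : AffLat n) : Prop := ∃ w i, a = R.actR w (simpleVec i)

variable {R}

theorem isRealRoot_simpleVec (i : Fin (n + 1)) : R.IsRealRoot (simpleVec i) :=
  ⟨1, i, (R.actR_one _).symm⟩

theorem IsRealRoot.actR {a : AffLat n} (ha : R.IsRealRoot a) (w : W) :
    R.IsRealRoot (R.actR w a) := by
  obtain ⟨u, i, rfl⟩ := ha
  exact ⟨w * u, i, by rw [R.actR_mul]⟩

theorem IsRealRoot.pairing_coroot {a : AffLat n} (ha : R.IsRealRoot a) :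
    R.pairing a (R.coroot a) = 2 := by
  obtain ⟨w, i, rfl⟩ := ha
  rw [R.coroot_act, R.coroot_simple, pairing_actR_actC, pairing_simpleVec_self]

theorem IsRealRoot.isReflection_refl {a : AffLat n} (ha : R.IsRealRoot a) :
    R.cs.IsReflection (R.refl a) := by
  obtain ⟨w, i, rfl⟩ := ha
  exact ⟨w, i, by rw [R.refl_act, R.refl_simple]⟩

theorem IsRealRoot.refl_ne_one {a : AffLat n} (ha : R.IsRealRoot a) : R.refl a ≠ 1 := by
  intro h
  simpa [h] using ha.isReflection_refl.odd_length

theorem IsRealRoot.actR_refl {a : AffLat n} (ha : R.IsRealRoot a) (x : AffLat n) :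
    R.actR (R.refl a) x = x - R.pairing x (R.coroot a) • a := by
  obtain ⟨w, i, rfl⟩ := ha
  rw [R.refl_act, R.refl_simple, R.coroot_act, R.coroot_simple, R.actR_mul, R.actR_mul,
    actR_simple_eq, actR_sub, actR_mul_inv_cancel, actR_zsmul, ← pairing_actR_actC R w,
    actR_mul_inv_cancel]

theorem IsRealRoot.actR_refl_self {a : AffLat n} (ha : R.IsRealRoot a) :
    R.actR (R.refl a) a = -a := by
  rw [ha.actR_refl, ha.pairing_coroot, two_smul]
  abel

theorem IsRealRoot.actC_refl_coroot {a : AffLat n} (ha : R.IsRealRoot a) :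
    R.actC (R.refl a) (R.coroot a) = -R.coroot a := by
  obtain ⟨w, i, rfl⟩ := ha
  rw [R.refl_act, R.refl_simple, R.coroot_act, R.coroot_simple, R.actC_mul, R.actC_mul,
    ← R.actC_mul w⁻¹, inv_mul_cancel, R.actC_one, actC_simple_simpleVec, actC_neg]

variable (R) in
theorem isRightDescent_iff_actR_simpleVec_nonpos (w : W) (k : Fin (n + 1)) :
    R.cs.IsRightDescent w k ↔ R.actR w (simpleVec k) ≤ 0 := by
  have h := R.length_refl_lt_iff _ (isRealRoot_simpleVec k) (simpleVec_nonneg k) w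
  rwa [R.refl_simple] at h

theorem IsRealRoot.nonneg_or_nonpos {a : AffLat n} (ha : R.IsRealRoot a) : 0 ≤ a ∨ a ≤ 0 := by
  obtain ⟨w, i, rfl⟩ := ha
  by_cases hw : R.cs.IsRightDescent w i
  · exact Or.inr ((isRightDescent_iff_actR_simpleVec_nonpos R w i).mp hw)
  · rw [R.cs.isRightDescent_iff_not_isRightDescent_mul, not_not,
      isRightDescent_iff_actR_simpleVec_nonpos, R.actR_mul, actR_simple_simpleVec,
      actR_neg, neg_nonpos] at hw
    exact Or.inl hw

/-- Pairing with the imaginary coroot `c`, whose coordinates are positive, kills `a`, while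
`⟨a, a∨⟩ = 2` shows that not all `⟨a, α_k∨⟩` vanish. -/
theorem IsRealRoot.exists_pairing_simpleVec_pos {a : AffLat n} (ha : R.IsRealRoot a) :
    ∃ k, 0 < R.pairing a (simpleVec k) := by
  by_contra! h
  have hterm : ∀ i ∈ Finset.univ, R.imag i * R.pairing a (simpleVec i) ≤ 0 := fun i _ =>
    mul_nonpos_of_nonneg_of_nonpos (by linarith [R.imag_pos i]) (h i)
  have hsum : ∑ i, R.imag i * R.pairing a (simpleVec i) = 0 :=
    (R.pairing_eq_sum_right a R.imag).symm.trans (R.pairing_imag_eq_zero a)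
  have hzero (i : Fin (n + 1)) : R.pairing a (simpleVec i) = 0 :=
    (mul_eq_zero.mp ((Finset.sum_eq_zero_iff_of_nonpos hterm).mp hsum i (Finset.mem_univ i))
      ).resolve_left (by linarith [R.imag_pos i])
  have h2 := ha.pairing_coroot
  rw [pairing_eq_sum_right] at h2
  simp [hzero] at h2

theorem IsPosRoot.isRealRoot {a : AffLat n} (ha : R.IsPosRoot a) : R.IsRealRoot a := ha.1

theorem IsPosRoot.refl_eq_simple_of_actR_simple_nonpos {a : AffLat n} (ha : R.IsPosRoot a)
    {k : Fin (n + 1)} (hk : R.actR (R.cs.simple k) a ≤ 0) : R.refl a = R.cs.simple k := by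
  have h := (R.length_refl_lt_iff a ha.isRealRoot ha.2 (R.cs.simple k)).mpr hk
  rw [R.cs.length_simple, Nat.lt_one_iff, R.cs.length_eq_zero_iff] at h
  rw [eq_inv_of_mul_eq_one_right h, R.cs.inv_simple]

/-- `s_k` negates both `a` and `a∨`, so both are multiples of the simple (co)root, and
`⟨a, a∨⟩ = 2` pins the multiples down to `1`. -/
theorem IsPosRoot.eq_simpleVec_of_actR_simple_nonpos {a : AffLat n} (ha : R.IsPosRoot a)
    {k : Fin (n + 1)} (hk : R.actR (R.cs.simple k) a ≤ 0) :
    a = simpleVec k ∧ R.coroot a = simpleVec k := by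
  have hrefl := ha.refl_eq_simple_of_actR_simple_nonpos hk
  have hsa := ha.isRealRoot.actR_refl_self
  have hsb := ha.isRealRoot.actC_refl_coroot
  rw [hrefl, actR_simple_eq] at hsa
  rw [hrefl, actC_simple_eq] at hsb
  have ha' := eq_smul_simpleVec_of_forall_ne (x := a) fun j hj =>
    apply_eq_zero_of_sub_smul_simpleVec_eq_neg hsa hj
  have hb' := eq_smul_simpleVec_of_forall_ne (x := R.coroot a) fun j hj =>
    apply_eq_zero_of_sub_smul_simpleVec_eq_neg hsb hj
  have hprod : a k * R.coroot a k = 1 := by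
    have h2 : R.pairing (a k • simpleVec k) (R.coroot a k • simpleVec k) = 2 := by
      rw [← ha', ← hb']; exact ha.isRealRoot.pairing_coroot
    rw [pairing_smul_left, pairing_smul_right, pairing_simpleVec_self] at h2
    linarith
  obtain ⟨h₁, h₂⟩ := (Int.eq_one_or_neg_one_of_mul_eq_one' hprod).resolve_right
    fun h => absurd (ha.2 k) (by simp [h.1])
  rw [h₁, one_smul] at ha'
  rw [h₂, one_smul] at hb'
  exact ⟨ha', hb'⟩

variable (R) in
theorem length_refl_le_length_refl_actR_simple_add_two (a : AffLat n) (k : Fin (n + 1)) :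
    R.cs.length (R.refl a) ≤ R.cs.length (R.refl (R.actR (R.cs.simple k) a)) + 2 := by
  have h : R.refl a = R.cs.simple k * R.refl (R.actR (R.cs.simple k) a) * R.cs.simple k := by
    rw [R.refl_act, R.cs.inv_simple, ← mul_assoc, ← mul_assoc, R.cs.simple_mul_simple_self,
      one_mul, mul_assoc, R.cs.simple_mul_simple_self, mul_one]
  rw [h]
  exact R.cs.length_simple_mul_mul_simple_le _ k k

theorem IsPosRoot.length_refl_le_two_mul_htv_sub_one {a : AffLat n} (ha : R.IsPosRoot a) :
    (R.cs.length (R.refl a) : ℤ) ≤ 2 * htv a - 1 := by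
  induction hm : (htv a).toNat using Nat.strong_induction_on generalizing a with
  | _ m ih =>
  obtain ⟨k, hk⟩ := ha.isRealRoot.exists_pairing_simpleVec_pos
  rcases (ha.isRealRoot.actR (R.cs.simple k)).nonneg_or_nonpos with hpos | hneg
  · have hb : R.IsPosRoot (R.actR (R.cs.simple k) a) := ⟨ha.isRealRoot.actR _, hpos⟩
    have hht : htv (R.actR (R.cs.simple k) a) = htv a - R.pairing a (simpleVec k) := by
      rw [actR_simple_eq, htv_sub_smul_simpleVec]
    have hht_nonneg := htv_nonneg hpos
    have IH := ih _ (by omega) hb rfl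
    have hlen := R.length_refl_le_length_refl_actR_simple_add_two a k
    omega
  · obtain ⟨rfl, -⟩ := ha.eq_simpleVec_of_actR_simple_nonpos hneg
    simp [R.refl_simple, htv_simpleVec]

theorem IsPosRoot.one_le_pairing_simpleVec_coroot {a : AffLat n} (ha : R.IsPosRoot a)
    {k : Fin (n + 1)} (hk : R.cs.IsRightDescent (R.refl a) k) :
    1 ≤ R.pairing (simpleVec k) (R.coroot a) := by
  have hy := (isRightDescent_iff_actR_simpleVec_nonpos R _ k).mp hk k
  rw [ha.isRealRoot.actR_refl] at hy
  have hak := ha.2 k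
  simp only [Pi.sub_apply, Pi.smul_apply, smul_eq_mul, simpleVec_self, Pi.zero_apply] at hy hak
  nlinarith

/-- If `s_k (s_a α_k)` were nonnegative, `s_a α_k = α_k - ⟨α_k, a∨⟩ a ≤ 0` would vanish off `k`,
so `a` would be a multiple of `α_k`, contradicting `s_k a ≰ 0`. -/
theorem IsPosRoot.length_refl_actR_simple_lt {a : AffLat n} (ha : R.IsPosRoot a)
    {k : Fin (n + 1)} (hk : R.cs.IsRightDescent (R.refl a) k)
    (hneg : ¬R.actR (R.cs.simple k) a ≤ 0) :
    R.cs.length (R.refl (R.actR (R.cs.simple k) a)) < R.cs.length (R.refl a) := by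
  have hrefl : R.refl (R.actR (R.cs.simple k) a) = R.cs.simple k * R.refl a * R.cs.simple k := by
    rw [R.refl_act, R.cs.inv_simple]
  have hleft : R.cs.IsLeftDescent (R.refl a) k := by
    rw [← R.cs.isRightDescent_inv_iff, ha.isRealRoot.isReflection_refl.inv]
    exact hk
  suffices R.cs.IsRightDescent (R.cs.simple k * R.refl a) k from hrefl ▸ this.trans hleft
  have hy := (isRightDescent_iff_actR_simpleVec_nonpos R _ k).mp hk
  rw [isRightDescent_iff_actR_simpleVec_nonpos, R.actR_mul]
  refine (((isRealRoot_simpleVec k).actR _).actR _).nonneg_or_nonpos.resolve_left fun hsy => ?_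
  refine hneg ((R.actR_simple_of_forall_ne fun j hj => ?_).trans_le (neg_nonpos.mpr ha.2))
  have hyj : R.actR (R.refl a) (simpleVec k) j = 0 :=
    le_antisymm (hy j) ((hsy j).trans_eq (R.actR_simple_apply_of_ne _ hj))
  rw [ha.isRealRoot.actR_refl] at hyj
  simp only [Pi.sub_apply, Pi.smul_apply, smul_eq_mul, simpleVec_of_ne hj, zero_sub,
    neg_eq_zero, mul_eq_zero] at hyj
  exact hyj.resolve_left (by linarith [ha.one_le_pairing_simpleVec_coroot hk])

theorem IsPosRoot.length_refl_le_two_mul_htv_coroot_sub_one {a : AffLat n}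
    (ha : R.IsPosRoot a) : (R.cs.length (R.refl a) : ℤ) ≤ 2 * htv (R.coroot a) - 1 := by
  induction hm : R.cs.length (R.refl a) using Nat.strong_induction_on generalizing a with
  | _ m ih =>
  obtain ⟨k, hk⟩ := R.cs.exists_rightDescent_of_ne_one ha.isRealRoot.refl_ne_one
  by_cases hneg : R.actR (R.cs.simple k) a ≤ 0
  · obtain ⟨rfl, hc⟩ := ha.eq_simpleVec_of_actR_simple_nonpos hneg
    simp [← hm, R.refl_simple, hc, htv_simpleVec]
  · have hb : R.IsPosRoot (R.actR (R.cs.simple k) a) :=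
      ⟨ha.isRealRoot.actR _, ((ha.isRealRoot.actR _).nonneg_or_nonpos).resolve_right hneg⟩
    have hht : htv (R.coroot (R.actR (R.cs.simple k) a))
        = htv (R.coroot a) - R.pairing (simpleVec k) (R.coroot a) := by
      rw [R.coroot_act, actC_simple_eq, htv_sub_smul_simpleVec]
    have IH := ih _ (hm ▸ ha.length_refl_actR_simple_lt hk hneg) hb rfl
    have hp := ha.one_le_pairing_simpleVec_coroot hk
    have hlen := R.length_refl_le_length_refl_actR_simple_add_two a k
    omega

end AffineRootSystem

/-- For any positive real root `α` of the affine root system,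
`ℓ(s_α) ≤ 2 · min (ht α∨) (ht α) - 1`. -/
theorem length_reflection_le_two_min_height {n : ℕ} {W : Type*} [Group W]
    (R : AffineRootSystem n W) (a : AffLat n) (ha : R.IsPosRoot a) :
    (R.cs.length (R.refl a) : ℤ) ≤ 2 * min (htv (R.coroot a)) (htv a) - 1 := by
  have h_coroot := ha.length_refl_le_two_mul_htv_coroot_sub_one
  have h_root := ha.length_refl_le_two_mul_htv_sub_one
  omega
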